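/- Let γ > 0 and let L = {(t, γt) : t ∈ ℝ} be the line through the origin of slope γ. Then the one-dimensional Lebesgue measure of {t ∈ ℝ : (t, γt) ∈ Gₙ} tends to 0 as n → ∞; consequently the one-dimensional Lebesgue measure of {t ∈ ℝ : (t, γt) ∈ G} equals 0, where G is the Sierpinski gasket. -/

import Mathlib

open MeasureTheory Filter

/-- The closed triangle `E` with vertices `(0,0)`, `(1,0)`, `(0,1)`. -/
def E : Set (ℝ × ℝ) := {p : ℝ × ℝ | 0 ≤ p.1 ∧ 0 ≤ p.2 ∧ p.1 + p.2 ≤ 1}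

/-- The contraction `f₁(p) = p/2`. -/
noncomputable def f1 (p : ℝ × ℝ) : ℝ × ℝ := (p.1 / 2, p.2 / 2)

/-- The contraction `f₂(p) = p/2 + (1/2, 0)`. -/
noncomputable def f2 (p : ℝ × ℝ) : ℝ × ℝ := (p.1 / 2 + 1 / 2, p.2 / 2)

/-- The contraction `f₃(p) = p/2 + (0, 1/2)`. -/
noncomputable def f3 (p : ℝ × ℝ) : ℝ × ℝ := (p.1 / 2, p.2 / 2 + 1 / 2)

/-- The approximations `Gₙ` to the Sierpinski gasket: `G₀ = E` and
`G_{n+1} = f₁(Gₙ) ∪ f₂(Gₙ) ∪ f₃(Gₙ)`. -/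
noncomputable def G : ℕ → Set (ℝ × ℝ)
  | 0 => E
  | n + 1 => f1 '' G n ∪ f2 '' G n ∪ f3 '' G n

/-!
Write `ℓₙ(c)` for the length of the slice of `Gₙ` by the line `y = γ x + c`. By self-similarity,
`ℓₙ₊₁(c) ≤ ℓₙ(2c)/2 + ℓₙ(c')/2` with `c' = 2c + γ` or `c' = 2c - 1`: a line of positive slope
cannot cross both the right and the top copy of `Gₙ`. Slices with `c ∉ [-γ, 1]` are empty, so
following the doubling branch `k + 1` times kills every `c` away from `0`, while for `c` near `0`
the other branch escapes within `k` steps. Hence `sup_c ℓ` shrinks by the factor `1 - 2⁻⁽ᵏ⁺¹⁾`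
every `k + 1` levels, and `ℓₙ(0) → 0`. The slice of the gasket lies in every slice of `Gₙ`.
-/

namespace SierpinskiGasket

open Set

lemma G_succ_subset (n : ℕ) : G (n + 1) ⊆ G n := by
  induction n with
  | zero =>
    rintro p ((⟨q, ⟨h1, h2, h3⟩, rfl⟩ | ⟨q, ⟨h1, h2, h3⟩, rfl⟩) | ⟨q, ⟨h1, h2, h3⟩, rfl⟩) <;>
      refine ⟨?_, ?_, ?_⟩ <;> simp only [f1, f2, f3] <;> linarith
  | succ n ih =>
    simp only [G] at ih ⊢
    gcongr

lemma G_antitone : Antitone G := antitone_nat_of_succ_le G_succ_subset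

lemma G_subset_E (n : ℕ) : G n ⊆ E := G_antitone n.zero_le

lemma mem_image_f1 {S : Set (ℝ × ℝ)} {p : ℝ × ℝ} : p ∈ f1 '' S ↔ (2 * p.1, 2 * p.2) ∈ S := by
  constructor
  · rintro ⟨q, hq, rfl⟩
    simpa [f1, mul_div_cancel₀] using hq
  · exact fun h => ⟨_, h, by simp [f1]⟩

lemma mem_image_f2 {S : Set (ℝ × ℝ)} {p : ℝ × ℝ} :
    p ∈ f2 '' S ↔ (2 * p.1 - 1, 2 * p.2) ∈ S := by
  constructor
  · rintro ⟨q, hq, rfl⟩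
    convert hq using 2 <;> simp only [f2] <;> ring
  · exact fun h => ⟨_, h, by ext <;> simp only [f2] <;> ring⟩

lemma mem_image_f3 {S : Set (ℝ × ℝ)} {p : ℝ × ℝ} :
    p ∈ f3 '' S ↔ (2 * p.1, 2 * p.2 - 1) ∈ S := by
  constructor
  · rintro ⟨q, hq, rfl⟩
    convert hq using 2 <;> simp only [f3] <;> ring
  · exact fun h => ⟨_, h, by ext <;> simp only [f3] <;> ring⟩

def lineSlice (γ c : ℝ) (S : Set (ℝ × ℝ)) : Set ℝ := (fun t => (t, γ * t + c)) ⁻¹' S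

section Slices

variable {γ c : ℝ} {S : Set (ℝ × ℝ)}

lemma lineSlice_image_f1 : lineSlice γ c (f1 '' S) = (2 * ·) ⁻¹' lineSlice γ (2 * c) S := by
  ext t
  simp only [lineSlice, mem_preimage, mem_image_f1]
  ring_nf

lemma lineSlice_image_f2 :
    lineSlice γ c (f2 '' S) = (fun t => 2 * t - 1) ⁻¹' lineSlice γ (2 * c + γ) S := by
  ext t
  simp only [lineSlice, mem_preimage, mem_image_f2]
  ring_nf

lemma lineSlice_image_f3 :
    lineSlice γ c (f3 '' S) = (2 * ·) ⁻¹' lineSlice γ (2 * c - 1) S := by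
  ext t
  simp only [lineSlice, mem_preimage, mem_image_f3]
  ring_nf

lemma lineSlice_union {T : Set (ℝ × ℝ)} :
    lineSlice γ c (S ∪ T) = lineSlice γ c S ∪ lineSlice γ c T :=
  preimage_union

lemma lineSlice_E_subset_Icc : lineSlice γ c E ⊆ Icc 0 1 := by
  rintro t ⟨h1, h2, h3⟩
  exact ⟨h1, by dsimp at *; linarith⟩

lemma lineSlice_E_eq_empty (hγ : 0 ≤ γ) (hc : c < -γ ∨ 1 < c) : lineSlice γ c E = ∅ := by
  refine eq_empty_of_forall_notMem fun t ⟨h1, h2, h3⟩ => ?_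
  dsimp at *
  rcases hc with hc | hc <;> nlinarith

lemma eq_half_of_mem_lineSlice_image_f2_f3 (hγ : 0 < γ) {t₂ t₃ : ℝ}
    (h₂ : t₂ ∈ lineSlice γ c (f2 '' E)) (h₃ : t₃ ∈ lineSlice γ c (f3 '' E)) :
    t₂ = 1 / 2 ∧ t₃ = 1 / 2 := by
  obtain ⟨h₂₁, h₂₂, h₂₃⟩ := mem_image_f2.1 h₂
  obtain ⟨h₃₁, h₃₂, h₃₃⟩ := mem_image_f3.1 h₃
  dsimp at *
  have : t₂ ≤ t₃ := le_of_mul_le_mul_left (by linarith) hγ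
  constructor <;> linarith

end Slices

lemma measureReal_preimage_mul_left {a : ℝ} (ha : a ≠ 0) (S : Set ℝ) :
    volume.real ((a * ·) ⁻¹' S) = volume.real S / |a| := by
  simp [Measure.real, Real.volume_preimage_mul_left ha, div_eq_inv_mul]

lemma measureReal_preimage_mul_left_sub {a : ℝ} (ha : a ≠ 0) (b : ℝ) (S : Set ℝ) :
    volume.real ((fun t => a * t - b) ⁻¹' S) = volume.real S / |a| := by
  have : (fun t => a * t - b) ⁻¹' S = (a * ·) ⁻¹' ((· + -b) ⁻¹' S) := by
    ext t; simp [sub_eq_add_neg]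
  rw [this, measureReal_preimage_mul_left ha, Measure.real, Measure.real,
    measure_preimage_add_right]

noncomputable def sliceLength (γ : ℝ) (n : ℕ) (c : ℝ) : ℝ := volume.real (lineSlice γ c (G n))

section SliceLength

variable {γ : ℝ}

lemma lineSlice_G_subset_Icc (c : ℝ) (n : ℕ) : lineSlice γ c (G n) ⊆ Icc 0 1 :=
  (preimage_mono (G_subset_E n)).trans lineSlice_E_subset_Icc

lemma volume_lineSlice_G_ne_top (c : ℝ) (n : ℕ) : volume (lineSlice γ c (G n)) ≠ ⊤ :=
  measure_ne_top_of_subset (lineSlice_G_subset_Icc c n) (by simp)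

lemma sliceLength_nonneg (n : ℕ) (c : ℝ) : 0 ≤ sliceLength γ n c := measureReal_nonneg

lemma sliceLength_le_one (n : ℕ) (c : ℝ) : sliceLength γ n c ≤ 1 :=
  (measureReal_mono (lineSlice_G_subset_Icc c n) measure_Icc_lt_top.ne).trans_eq (by simp)

lemma sliceLength_antitone (c : ℝ) : Antitone (sliceLength γ · c) := fun _ _ hnm =>
  measureReal_mono (preimage_mono (G_antitone hnm)) (volume_lineSlice_G_ne_top c _)

lemma sliceLength_eq_zero (hγ : 0 ≤ γ) (n : ℕ) {c : ℝ} (hc : c < -γ ∨ 1 < c) :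
    sliceLength γ n c = 0 := by
  have : lineSlice γ c (G n) = ∅ :=
    subset_empty_iff.1 (lineSlice_E_eq_empty hγ hc ▸ preimage_mono (G_subset_E n))
  simp [sliceLength, this]

/-- The slice of `Gₙ₊₁` is the union of the rescaled slices of its three copies of `Gₙ`, and by
`eq_half_of_mem_lineSlice_image_f2_f3` at most one of the two upper copies contributes. -/
lemma sliceLength_succ_le (hγ : 0 < γ) (n : ℕ) (c : ℝ) :
    sliceLength γ (n + 1) c ≤ sliceLength γ n (2 * c) / 2 + sliceLength γ n (2 * c + γ) / 2 ∨
    sliceLength γ (n + 1) c ≤ sliceLength γ n (2 * c) / 2 + sliceLength γ n (2 * c - 1) / 2 := by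
  have h₁ : volume.real (lineSlice γ c (f1 '' G n)) = sliceLength γ n (2 * c) / 2 := by
    rw [lineSlice_image_f1, measureReal_preimage_mul_left two_ne_zero, abs_two, sliceLength]
  have h₂ : volume.real (lineSlice γ c (f2 '' G n)) = sliceLength γ n (2 * c + γ) / 2 := by
    rw [lineSlice_image_f2, measureReal_preimage_mul_left_sub two_ne_zero, abs_two, sliceLength]
  have h₃ : volume.real (lineSlice γ c (f3 '' G n)) = sliceLength γ n (2 * c - 1) / 2 := by
    rw [lineSlice_image_f3, measureReal_preimage_mul_left two_ne_zero, abs_two, sliceLength]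
  have hsplit : sliceLength γ (n + 1) c ≤ volume.real (lineSlice γ c (f1 '' G n)) +
      volume.real (lineSlice γ c (f2 '' G n)) + volume.real (lineSlice γ c (f3 '' G n)) := by
    rw [sliceLength, G, lineSlice_union, lineSlice_union]
    exact (measureReal_union_le _ _).trans (add_le_add_left (measureReal_union_le _ _) _)
  by_cases h : lineSlice γ c (f2 '' G n) ⊆ {1 / 2}
  · have : volume.real (lineSlice γ c (f2 '' G n)) = 0 := by
      simp [Measure.real, measure_mono_null h (measure_singleton _)]
    exact Or.inr (by linarith)
  · obtain ⟨t₂, ht₂, hne⟩ := not_subset.1 h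
    have : lineSlice γ c (f3 '' G n) = ∅ := eq_empty_of_forall_notMem fun t₃ ht₃ => hne
      (eq_half_of_mem_lineSlice_image_f2_f3 hγ (image_mono (G_subset_E n) ht₂)
        (image_mono (G_subset_E n) ht₃)).1
    rw [this, measureReal_empty] at hsplit
    exact Or.inl (by linarith)

lemma sliceLength_le_of_iterate (hγ : 0 < γ) {n : ℕ} {a : ℝ} (ha : ∀ c, sliceLength γ n c ≤ a)
    (j : ℕ) (c : ℝ) :
    sliceLength γ (n + j) c ≤ sliceLength γ n (2 ^ j * c) / 2 ^ j + (1 - 1 / 2 ^ j) * a := by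
  induction j generalizing c with
  | zero => simp
  | succ j ih =>
    have hbound (c' : ℝ) : sliceLength γ (n + j) c' ≤ a :=
      (sliceLength_antitone c' (n.le_add_right j)).trans (ha c')
    have hstep : sliceLength γ (n + j + 1) c ≤ sliceLength γ (n + j) (2 * c) / 2 + a / 2 := by
      rcases sliceLength_succ_le hγ (n + j) c with h | h <;>
        linarith [hbound (2 * c + γ), hbound (2 * c - 1)]
    calc sliceLength γ (n + j + 1) c
        ≤ sliceLength γ (n + j) (2 * c) / 2 + a / 2 := hstep
      _ ≤ (sliceLength γ n (2 ^ j * (2 * c)) / 2 ^ j + (1 - 1 / 2 ^ j) * a) / 2 + a / 2 := by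
        gcongr; exact ih _
      _ = sliceLength γ n (2 ^ (j + 1) * c) / 2 ^ (j + 1) + (1 - 1 / 2 ^ (j + 1)) * a := by
        rw [show (2 : ℝ) ^ j * (2 * c) = 2 ^ (j + 1) * c by ring, pow_succ]
        ring

/-- Either `2ᵏ⁺¹ c` lies outside `[-γ, 1]`, or `c` is so small that both `2ᵏ (2c + γ)` and
`2ᵏ (2c - 1)` do. -/
lemma sliceLength_le_mul_of_le (hγ : 0 < γ) {k : ℕ} (hk : 1 + γ + γ⁻¹ < 2 ^ k) {n : ℕ} {a : ℝ}
    (ha : ∀ c, sliceLength γ n c ≤ a) (c : ℝ) :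
    sliceLength γ (n + k + 1) c ≤ (1 - 1 / 2 ^ (k + 1)) * a := by
  have hiter := sliceLength_le_of_iterate hγ ha
  by_cases hc : 2 ^ (k + 1) * c < -γ ∨ 1 < 2 ^ (k + 1) * c
  · have := hiter (k + 1) c
    rw [sliceLength_eq_zero hγ.le n hc, ← add_assoc] at this
    simpa using this
  rw [not_or, not_lt, not_lt, pow_succ] at hc
  have hγk : 1 < (2 ^ k - 1) * γ :=
    (inv_mul_cancel₀ hγ.ne').symm.trans_lt (mul_lt_mul_of_pos_right (by linarith) hγ)
  have hγinv : 0 < γ⁻¹ := inv_pos.2 hγ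
  have hescape (c' : ℝ) (hc' : 2 ^ k * c' < -γ ∨ 1 < 2 ^ k * c') :
      sliceLength γ (n + k) c' ≤ (1 - 1 / 2 ^ k) * a := by
    simpa [sliceLength_eq_zero hγ.le n hc'] using hiter k c'
  have h₁ := hescape (2 * c + γ) (Or.inr (by nlinarith))
  have h₂ := hescape (2 * c - 1) (Or.inl (by nlinarith))
  have h₀ := (sliceLength_antitone (2 * c) (n.le_add_right k)).trans (ha (2 * c))
  have hsum : a / 2 + (1 - 1 / 2 ^ k) * a / 2 = (1 - 1 / 2 ^ (k + 1)) * a := by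
    rw [pow_succ]; ring
  rcases sliceLength_succ_le hγ (n + k) c with h | h <;> linarith

lemma sliceLength_le_pow (hγ : 0 < γ) {k : ℕ} (hk : 1 + γ + γ⁻¹ < 2 ^ k) (m : ℕ) (c : ℝ) :
    sliceLength γ (m * (k + 1)) c ≤ (1 - 1 / 2 ^ (k + 1)) ^ m := by
  induction m generalizing c with
  | zero => simpa using sliceLength_le_one 0 c
  | succ m ih =>
    rw [Nat.succ_mul, ← add_assoc, pow_succ']
    exact sliceLength_le_mul_of_le hγ hk ih c

lemma tendsto_sliceLength (hγ : 0 < γ) (c : ℝ) :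
    Tendsto (sliceLength γ · c) atTop (nhds 0) := by
  obtain ⟨k, hk⟩ := pow_unbounded_of_one_lt (1 + γ + γ⁻¹) (one_lt_two (α := ℝ))
  have hq₀ : 0 ≤ 1 - 1 / (2 : ℝ) ^ (k + 1) := by
    rw [sub_nonneg]; exact div_le_one_of_le₀ (one_le_pow₀ one_le_two) (by positivity)
  have hq₁ : 1 - 1 / (2 : ℝ) ^ (k + 1) < 1 := by
    rw [sub_lt_self_iff]; positivity
  refine squeeze_zero (fun n => sliceLength_nonneg n c) (fun n => ?_)
    ((tendsto_pow_atTop_nhds_zero_of_lt_one hq₀ hq₁).comp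
      (Nat.tendsto_div_const_atTop k.succ_ne_zero))
  exact (sliceLength_antitone c (Nat.div_mul_le_self n (k + 1))).trans
    (sliceLength_le_pow hγ hk _ c)

end SliceLength

end SierpinskiGasket

open SierpinskiGasket

theorem stmt2 (γ : ℝ) (hγ : 0 < γ) :
    Tendsto (fun n : ℕ => volume {t : ℝ | (t, γ * t) ∈ G n}) atTop (nhds 0) ∧
    volume {t : ℝ | (t, γ * t) ∈ ⋂ n : ℕ, G n} = 0 := by
  have hslice (n : ℕ) : {t : ℝ | (t, γ * t) ∈ G n} = lineSlice γ 0 (G n) := by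
    ext; simp [lineSlice]
  have hlim : Tendsto (fun n : ℕ => volume {t : ℝ | (t, γ * t) ∈ G n}) atTop (nhds 0) := by
    simp_rw [hslice, ← ofReal_measureReal (volume_lineSlice_G_ne_top 0 _)]
    simpa [sliceLength] using ENNReal.tendsto_ofReal (tendsto_sliceLength hγ 0)
  refine ⟨hlim, le_antisymm ?_ bot_le⟩
  exact ge_of_tendsto' hlim fun n => measure_mono fun t ht => Set.mem_iInter.1 ht n
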